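/- Let 0 < a < b, α > 0, ρ > 0, and let f : [a,b] → ℝ be convex and integrable, and F(x) = f(x) + f(a+b−x). Then F((a+b)/2) ≤ (ρ^α Γ(α+1)/(b^ρ − a^ρ)^α) · ^ρI^α_{a+}F(b). -/

import Mathlib

/-!
Since `(a + b) / 2` is the midpoint of `t` and `a + b - t`, convexity gives
`F ((a + b) / 2) ≤ F t` for every `t ∈ [a, b]`. Integrating this against the nonnegative kernel
`t ^ (ρ - 1) * (b ^ ρ - t ^ ρ) ^ (α - 1)`, whose integral over `[a, b]` is
`(b ^ ρ - a ^ ρ) ^ α / (ρ * α)` by the substitution `u = t ^ ρ`, and using `Γ (α + 1) = α Γ α`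
yields the inequality. The weighted integral of `F` exists because `F` is bounded on `[a, b]`:
below by `F ((a + b) / 2)`, above by `2 * max (f a) (f b)`.
-/

open MeasureTheory intervalIntegral Real

open Set

lemma ConvexOn.two_mul_map_add_div_two_le {s : Set ℝ} {f : ℝ → ℝ} (hf : ConvexOn ℝ s f)
    {x y : ℝ} (hx : x ∈ s) (hy : y ∈ s) : 2 * f ((x + y) / 2) ≤ f x + f y := by
  have h := hf.2 hx hy (by norm_num : (0 : ℝ) ≤ 1 / 2) (by norm_num : (0 : ℝ) ≤ 1 / 2)
    (by norm_num)
  simp only [smul_eq_mul] at h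
  rw [show (x + y) / 2 = 1 / 2 * x + 1 / 2 * y by ring]
  linarith

section Reflection

variable {a b t : ℝ} {f : ℝ → ℝ}

lemma add_sub_mem_Icc (ht : t ∈ Icc a b) : a + b - t ∈ Icc a b :=
  ⟨by linarith [ht.2], by linarith [ht.1]⟩

lemma ConvexOn.add_reflect_midpoint_le (hf : ConvexOn ℝ (Icc a b) f) (ht : t ∈ Icc a b) :
    f ((a + b) / 2) + f (a + b - (a + b) / 2) ≤ f t + f (a + b - t) := by
  have h := hf.two_mul_map_add_div_two_le ht (add_sub_mem_Icc ht)
  rw [show t + (a + b - t) = a + b by ring] at h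
  rw [show a + b - (a + b) / 2 = (a + b) / 2 by ring]
  linarith

lemma ConvexOn.add_reflect_le (hf : ConvexOn ℝ (Icc a b) f) (ht : t ∈ Icc a b) :
    f t + f (a + b - t) ≤ 2 * max (f a) (f b) := by
  have hab : a ≤ b := ht.1.trans ht.2
  have hle : ∀ s ∈ Icc a b, f s ≤ max (f a) (f b) := fun s hs =>
    hf.le_on_segment (left_mem_Icc.2 hab) (right_mem_Icc.2 hab) (segment_eq_Icc hab ▸ hs)
  linarith [hle t ht, hle _ (add_sub_mem_Icc ht)]

lemma IntervalIntegrable.add_reflect (hf : IntervalIntegrable f volume a b) :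
    IntervalIntegrable (fun x => f x + f (a + b - x)) volume a b := by
  have h := hf.comp_sub_left (a + b)
  rw [add_sub_cancel_right, add_sub_cancel_left] at h
  exact hf.add h.symm

end Reflection

section Substitution

variable {E : Type*} [NormedAddCommGroup E] [NormedSpace ℝ E] {a b ρ : ℝ}

lemma integral_Icc_deriv_rpow_smul (ha : 0 ≤ a) (hab : a ≤ b) (hρ : 0 < ρ) (g : ℝ → E) :
    ∫ t in Icc a b, (ρ * t ^ (ρ - 1)) • g (t ^ ρ) = ∫ u in Icc (a ^ ρ) (b ^ ρ), g u :=
  integral_Icc_deriv_smul_of_deriv_nonneg (continuous_rpow_const hρ.le).continuousOn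
    (fun _ ht => hasDerivAt_rpow_const (Or.inl (ha.trans_lt ht.1).ne'))
    (fun _ ht => mul_nonneg hρ.le (rpow_nonneg (ha.trans ht.1.le) _)) hab

lemma integrableOn_Icc_deriv_rpow_smul_iff (ha : 0 ≤ a) (hab : a ≤ b) (hρ : 0 < ρ)
    (g : ℝ → E) :
    IntegrableOn (fun t => (ρ * t ^ (ρ - 1)) • g (t ^ ρ)) (Icc a b) ↔
      IntegrableOn g (Icc (a ^ ρ) (b ^ ρ)) :=
  integrableOn_Icc_deriv_smul_iff_of_deriv_nonneg (continuous_rpow_const hρ.le).continuousOn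
    (fun _ ht => hasDerivAt_rpow_const (Or.inl (ha.trans_lt ht.1).ne'))
    (fun _ ht => mul_nonneg hρ.le (rpow_nonneg (ha.trans ht.1.le) _)) hab

end Substitution

section SubRpow

variable {c d α : ℝ}

lemma integrableOn_Icc_sub_rpow (hcd : c ≤ d) (hα : 0 < α) :
    IntegrableOn (fun u => (d - u) ^ (α - 1)) (Icc c d) := by
  have h := IntervalIntegrable.comp_sub_left
    (intervalIntegrable_rpow' (r := α - 1) (by linarith) (a := 0) (b := d - c)) d
  rw [sub_zero, sub_sub_cancel] at h
  exact (intervalIntegrable_iff_integrableOn_Icc_of_le hcd).1 h.symm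

lemma integral_Icc_sub_rpow (hcd : c ≤ d) (hα : 0 < α) :
    ∫ u in Icc c d, (d - u) ^ (α - 1) = (d - c) ^ α / α := by
  rw [integral_Icc_eq_integral_Ioc, ← integral_of_le hcd,
    integral_comp_sub_left (fun s => s ^ (α - 1)), sub_self,
    integral_rpow (Or.inl (by linarith)), sub_add_cancel, zero_rpow hα.ne', sub_zero]

end SubRpow

noncomputable def katugampolaKernel (ρ α b t : ℝ) : ℝ :=
  t ^ (ρ - 1) * (b ^ ρ - t ^ ρ) ^ (α - 1)

section Kernel

variable {a b ρ α : ℝ}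

lemma katugampolaKernel_nonneg (hρ : 0 ≤ ρ) {t : ℝ} (ht : t ∈ Icc 0 b) :
    0 ≤ katugampolaKernel ρ α b t :=
  mul_nonneg (rpow_nonneg ht.1 _) (rpow_nonneg (sub_nonneg.2 (rpow_le_rpow ht.1 ht.2 hρ)) _)

lemma mul_katugampolaKernel (ρ α b t : ℝ) :
    ρ * katugampolaKernel ρ α b t = (ρ * t ^ (ρ - 1)) • (b ^ ρ - t ^ ρ) ^ (α - 1) := by
  rw [katugampolaKernel, smul_eq_mul, mul_assoc]

lemma integrableOn_katugampolaKernel (ha : 0 ≤ a) (hab : a ≤ b) (hρ : 0 < ρ) (hα : 0 < α) :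
    IntegrableOn (katugampolaKernel ρ α b) (Icc a b) := by
  have h := (integrableOn_Icc_deriv_rpow_smul_iff ha hab hρ _).2
    (integrableOn_Icc_sub_rpow (rpow_le_rpow ha hab hρ.le) hα)
  simp_rw [← mul_katugampolaKernel] at h
  exact (integrable_const_mul_iff (isUnit_iff_ne_zero.2 hρ.ne') _).1 h

lemma integral_katugampolaKernel (ha : 0 ≤ a) (hab : a ≤ b) (hρ : 0 < ρ) (hα : 0 < α) :
    ∫ t in Icc a b, katugampolaKernel ρ α b t = (b ^ ρ - a ^ ρ) ^ α / (ρ * α) := by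
  have h := integral_Icc_deriv_rpow_smul ha hab hρ (fun u => (b ^ ρ - u) ^ (α - 1))
  simp_rw [← mul_katugampolaKernel, MeasureTheory.integral_const_mul,
    integral_Icc_sub_rpow (rpow_le_rpow ha hab hρ.le) hα] at h
  rw [mul_comm ρ α, ← div_div, ← h]
  field_simp

lemma mul_integral_katugampolaKernel_le_integral (ha : 0 ≤ a) (hab : a ≤ b) (hρ : 0 < ρ)
    (hα : 0 < α) {F : ℝ → ℝ} {c C : ℝ}
    (hFm : AEStronglyMeasurable F (volume.restrict (Icc a b)))
    (hFC : ∀ t ∈ Icc a b, |F t| ≤ C) (hcF : ∀ t ∈ Icc a b, c ≤ F t) :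
    c * ((b ^ ρ - a ^ ρ) ^ α / (ρ * α)) ≤
      ∫ t in Icc a b, katugampolaKernel ρ α b t * F t := by
  have hk := integrableOn_katugampolaKernel ha hab hρ hα
  have hkF : IntegrableOn (fun t => katugampolaKernel ρ α b t * F t) (Icc a b) :=
    hk.mul_bdd hFm ((ae_restrict_of_forall_mem measurableSet_Icc) hFC)
  rw [← integral_katugampolaKernel ha hab hρ hα, ← MeasureTheory.integral_const_mul]
  refine setIntegral_mono_on (hk.const_mul c) hkF measurableSet_Icc fun t ht => ?_
  rw [mul_comm]
  exact mul_le_mul_of_nonneg_left (hcF t ht)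
    (katugampolaKernel_nonneg hρ.le ⟨ha.trans ht.1, ht.2⟩)

end Kernel

theorem katugampola_hh_F_left (a b α ρ : ℝ) (ha : 0 < a) (hab : a < b)
    (hα : 0 < α) (hρ : 0 < ρ) (f F : ℝ → ℝ)
    (hconv : ConvexOn ℝ (Set.Icc a b) f)
    (hint : IntervalIntegrable f volume a b)
    (hF : ∀ x, F x = f x + f (a + b - x)) :
    F ((a + b) / 2) ≤
      (ρ ^ α * Real.Gamma (α + 1) / (b ^ ρ - a ^ ρ) ^ α) *
        ((ρ ^ (1 - α) / Real.Gamma α) *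
          ∫ t in a..b, t ^ (ρ - 1) * (b ^ ρ - t ^ ρ) ^ (α - 1) * F t) := by
  set D := b ^ ρ - a ^ ρ
  set m := (a + b) / 2
  have hD : 0 < D ^ α := rpow_pos_of_pos (sub_pos.2 (rpow_lt_rpow ha.le hab hρ)) α
  have hmid : ∀ t ∈ Icc a b, F m ≤ F t := fun t ht => by
    simpa only [hF] using hconv.add_reflect_midpoint_le ht
  have hbdd : ∀ t ∈ Icc a b, |F t| ≤ max |F m| |2 * max (f a) (f b)| := fun t ht =>
    abs_le_max_abs_abs (hmid t ht) (by simpa only [hF] using hconv.add_reflect_le ht)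
  have hmeas : AEStronglyMeasurable F (volume.restrict (Icc a b)) := by
    rw [funext hF]
    exact ((intervalIntegrable_iff_integrableOn_Icc_of_le hab.le).1
      hint.add_reflect).aestronglyMeasurable
  have key := mul_integral_katugampolaKernel_le_integral ha.le hab.le hρ hα hmeas hbdd hmid
  have hconst : ρ ^ α * Gamma (α + 1) / D ^ α * (ρ ^ (1 - α) / Gamma α) = ρ * α / D ^ α := by
    have hρρ : ρ ^ α * ρ ^ (1 - α) = ρ := by rw [← rpow_add hρ, add_sub_cancel, rpow_one]
    rw [Gamma_add_one hα.ne']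
    field_simp [(Gamma_pos_of_pos hα).ne']
    linear_combination hρρ
  rw [← mul_assoc, hconst, integral_of_le hab.le, ← integral_Icc_eq_integral_Ioc]
  calc F m = ρ * α / D ^ α * (F m * (D ^ α / (ρ * α))) := by field_simp
    _ ≤ _ := mul_le_mul_of_nonneg_left key (div_pos (mul_pos hρ hα) hD).le
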